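/- arXiv:1310.7273 — 6 statements merged into one kernel-verified Lean document; each statement's English description precedes it below -/
import Mathlib

section
/- Let S be the 6×6 matrix with rows (1,0,0,0,0,0), (0,0,-1,1,0,0), (0,-1,0,1,0,0), (0,0,0,1,0,0), (0,-1,-1,1,1,0), (0,-1,-1,1,0,1), let T₁ be the permutation matrix swapping coordinates 4 and 5, and let R₁ be the permutation matrix swapping coordinates 1 and 2. Then (S·T₁)³ = I₆ and (S·R₁)³ = I₆. -/
/-- `(S·T₁)³ = I₆` and `(S·R₁)³ = I₆` for the Whipple transformation matrix `S`,
the swap `T₁` of coordinates 4,5 and the swap `R₁` of coordinates 1,2. -/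
theorem whipple_braid_relations :
    let S : Matrix (Fin 6) (Fin 6) ℤ :=
      !![1,0,0,0,0,0; 0,0,-1,1,0,0; 0,-1,0,1,0,0; 0,0,0,1,0,0; 0,-1,-1,1,1,0; 0,-1,-1,1,0,1]
    let T₁ : Matrix (Fin 6) (Fin 6) ℤ :=
      !![1,0,0,0,0,0; 0,1,0,0,0,0; 0,0,1,0,0,0; 0,0,0,0,1,0; 0,0,0,1,0,0; 0,0,0,0,0,1]
    let R₁ : Matrix (Fin 6) (Fin 6) ℤ :=
      !![0,1,0,0,0,0; 1,0,0,0,0,0; 0,0,1,0,0,0; 0,0,0,1,0,0; 0,0,0,0,1,0; 0,0,0,0,0,1]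
    (S * T₁) ^ 3 = 1 ∧ (S * R₁) ^ 3 = 1 := by
  decide
end

section
/- The multiplicative group of 6×6 integer matrices generated by S (with rows (1,0,0,0,0,0), (0,0,-1,1,0,0), (0,-1,0,1,0,0), (0,0,0,1,0,0), (0,-1,-1,1,1,0), (0,-1,-1,1,0,1)), the permutation matrices R₁, R₂ (swapping coordinates 1↔2 and 2↔3) and T₁, T₂ (swapping coordinates 4↔5 and 5↔6) is isomorphic to the symmetric group 𝔖₆. -/
/-!
Listed as `R₂, R₁, S, T₁, T₂`, the generators are intertwined by one integer matrix `P` of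
nonzero determinant with the permutation matrices of the adjacent transpositions
`(0 1), (1 2), …, (4 5)`: over `ℚ` they are simultaneously conjugate to them.
Conjugation and the entrywise embedding of `ℤ` into `ℚ` are injective monoid maps, so the submonoid
generated by the five matrices is isomorphic to the submonoid of `𝔖₆` generated by the adjacent
transpositions, which is all of `𝔖₆`.
-/

open Equiv Function

theorem Matrix.permMatrixHom_injective {n R : Type*} [DecidableEq n] [Fintype n]
    [NonAssocSemiring R] [Nontrivial R] :
    Injective (Matrix.permMatrixHom : Perm n →* Matrix n n R) := by
  intro σ τ h
  refine inv_injective (Equiv.ext fun x => Option.some_injective _ ?_)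
  simpa using congrFun (congrArg DFunLike.coe (PEquiv.toMatrix_injective h)) x

namespace Submonoid

variable {M G N ι : Type*} [Monoid M] [Monoid G] [Monoid N]

theorem nonempty_mulEquiv_closure_range_of_comp_eq {f : M →* N} {g : G →* N}
    (hf : Injective f) (hg : Injective g) {a : ι → M} {b : ι → G} (h : f ∘ a = g ∘ b) :
    Nonempty (closure (Set.range a) ≃* closure (Set.range b)) := by
  have hmap : (closure (Set.range a)).map f = (closure (Set.range b)).map g := by
    rw [MonoidHom.map_mclosure, MonoidHom.map_mclosure, ← Set.range_comp, ← Set.range_comp, h]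
  exact ⟨(equivMapOfInjective _ f hf).trans <|
    (MulEquiv.submonoidCongr hmap).trans (equivMapOfInjective _ g hg).symm⟩

theorem nonempty_mulEquiv_closure_range_of_conj {f : M →* N} {g : G →* N}
    (hf : Injective f) (hg : Injective g) (u : Nˣ) {a : ι → M} {b : ι → G}
    (h : ∀ i, f (a i) * u = u * g (b i)) :
    Nonempty (closure (Set.range a) ≃* closure (Set.range b)) := by
  let conj : N ≃* N := MulDistribMulAction.toMulEquiv N (ConjAct.toConjAct u⁻¹)
  refine nonempty_mulEquiv_closure_range_of_comp_eq (f := conj.toMonoidHom.comp f)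
    (conj.injective.comp hf) hg (funext fun i => ?_)
  show u⁻¹ * f (a i) * ↑u⁻¹⁻¹ = g (b i)
  rw [inv_inv, mul_assoc, h, ← mul_assoc, Units.inv_mul, one_mul]

end Submonoid

theorem Matrix.nonempty_mulEquiv_closure_range_of_intertwining {n R ι : Type*} [Fintype n]
    [DecidableEq n] [CommRing R] [IsDomain R] {A : ι → Matrix n n R} {σ : ι → Perm n}
    (P : Matrix n n R) (hP : P.det ≠ 0) (h : ∀ i, A i * P = P * permMatrixHom (σ i)) :
    Nonempty (Submonoid.closure (Set.range A) ≃* Submonoid.closure (Set.range σ)) := by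
  let f : Matrix n n R →+* Matrix n n (FractionRing R) := (algebraMap R _).mapMatrix
  have hf : Injective f := Matrix.map_injective (IsFractionRing.injective R _)
  have hfP : IsUnit (f P) := by
    rw [Matrix.isUnit_iff_isUnit_det, ← RingHom.map_det, isUnit_iff_ne_zero]
    exact (map_ne_zero_iff _ (IsFractionRing.injective R _)).mpr hP
  refine Submonoid.nonempty_mulEquiv_closure_range_of_conj (g := f.toMonoidHom.comp permMatrixHom)
    hf (hf.comp permMatrixHom_injective) hfP.unit fun i => ?_
  rw [IsUnit.unit_spec]
  exact (map_mul f _ _).symm.trans ((congrArg f (h i)).trans (map_mul f _ _))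

-- The generators `R₂, R₁, S, T₁, T₂` permute its six columns as the adjacent transpositions.
def whippleIntertwiner : Matrix (Fin 6) (Fin 6) ℤ :=
  !![0,0,1,1,1,1; 0,1,0,1,1,1; 1,0,0,1,1,1; 1,1,1,1,2,2; 1,1,1,2,1,2; 1,1,1,2,2,1]

theorem whippleIntertwiner_det_ne_zero : whippleIntertwiner.det ≠ 0 := by
  have hQ : whippleIntertwiner * !![-3,-3,1,1,1,1; -3,1,-3,1,1,1; 1,-3,-3,1,1,1;
      1,1,1,-3,1,1; 1,1,1,1,-3,1; 1,1,1,1,1,-3] = (4 : ℤ) • 1 := by decide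
  intro h0
  have := congrArg Matrix.det hQ
  rw [Matrix.det_mul, h0, zero_mul, Matrix.det_smul, Matrix.det_one] at this
  norm_num at this

/-- The multiplicative group generated by the Whipple transformation matrix `S`
and the permutation matrices `R₁, R₂, T₁, T₂` is isomorphic to `𝔖₆`.
(All generators are involutions, so the submonoid they generate is a group.) -/
theorem whipple_group_iso_S6 :
    let S : Matrix (Fin 6) (Fin 6) ℤ :=
      !![1,0,0,0,0,0; 0,0,-1,1,0,0; 0,-1,0,1,0,0; 0,0,0,1,0,0; 0,-1,-1,1,1,0; 0,-1,-1,1,0,1]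
    let R₁ : Matrix (Fin 6) (Fin 6) ℤ :=
      !![0,1,0,0,0,0; 1,0,0,0,0,0; 0,0,1,0,0,0; 0,0,0,1,0,0; 0,0,0,0,1,0; 0,0,0,0,0,1]
    let R₂ : Matrix (Fin 6) (Fin 6) ℤ :=
      !![1,0,0,0,0,0; 0,0,1,0,0,0; 0,1,0,0,0,0; 0,0,0,1,0,0; 0,0,0,0,1,0; 0,0,0,0,0,1]
    let T₁ : Matrix (Fin 6) (Fin 6) ℤ :=
      !![1,0,0,0,0,0; 0,1,0,0,0,0; 0,0,1,0,0,0; 0,0,0,0,1,0; 0,0,0,1,0,0; 0,0,0,0,0,1]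
    let T₂ : Matrix (Fin 6) (Fin 6) ℤ :=
      !![1,0,0,0,0,0; 0,1,0,0,0,0; 0,0,1,0,0,0; 0,0,0,1,0,0; 0,0,0,0,0,1; 0,0,0,0,1,0]
    Nonempty ((Submonoid.closure {S, R₁, R₂, T₁, T₂} : Submonoid (Matrix (Fin 6) (Fin 6) ℤ))
      ≃* Equiv.Perm (Fin 6)) := by
  intro S R₁ R₂ T₁ T₂
  have hgens : ({S, R₁, R₂, T₁, T₂} : Set (Matrix (Fin 6) (Fin 6) ℤ)) =
      Set.range ![R₂, R₁, S, T₁, T₂] := by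
    ext
    simp only [Set.mem_insert_iff, Set.mem_singleton_iff, Matrix.range_cons, Matrix.range_empty,
      Set.union_empty, Set.singleton_union]
    tauto
  have hP : ∀ i, ![R₂, R₁, S, T₁, T₂] i * whippleIntertwiner =
      whippleIntertwiner * Matrix.permMatrixHom (swap i.castSucc i.succ) := by
    decide
  obtain ⟨e⟩ := Matrix.nonempty_mulEquiv_closure_range_of_intertwining _
    whippleIntertwiner_det_ne_zero hP
  rw [← hgens, Perm.mclosure_swap_castSucc_succ] at e
  exact ⟨e.trans Submonoid.topEquiv⟩
end

section
/- Let S₀ be the 6×6 permutation matrix swapping coordinates 1 and 2, let S₂ be the permutation matrix swapping coordinates 5 and 6, and let S₁ be the 6×6 matrix with rows (1,0,0,0,0,0), (0,-1,0,0,1,0), (0,0,-1,0,1,0), (0,-1,-1,0,1,1), (0,0,0,0,1,0), (0,-1,-1,1,1,0). Then S₀² = S₁² = S₂² = I₆, (S₀S₂)² = I₆, (S₀S₁)⁴ = I₆, and (S₁S₂)⁴ = I₆. -/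
/-- The generators `S₀, S₁, S₂` of the invariance group of the rectangular
`Aₙ` `₄F₃` series satisfy the affine `C̃₂` Coxeter relations. -/
theorem rectangular_C2_relations :
    let S₀ : Matrix (Fin 6) (Fin 6) ℤ :=
      !![0,1,0,0,0,0; 1,0,0,0,0,0; 0,0,1,0,0,0; 0,0,0,1,0,0; 0,0,0,0,1,0; 0,0,0,0,0,1]
    let S₁ : Matrix (Fin 6) (Fin 6) ℤ :=
      !![1,0,0,0,0,0; 0,-1,0,0,1,0; 0,0,-1,0,1,0; 0,-1,-1,0,1,1; 0,0,0,0,1,0; 0,-1,-1,1,1,0]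
    let S₂ : Matrix (Fin 6) (Fin 6) ℤ :=
      !![1,0,0,0,0,0; 0,1,0,0,0,0; 0,0,1,0,0,0; 0,0,0,1,0,0; 0,0,0,0,0,1; 0,0,0,0,1,0]
    S₀ ^ 2 = 1 ∧ S₁ ^ 2 = 1 ∧ S₂ ^ 2 = 1 ∧
      (S₀ * S₂) ^ 2 = 1 ∧ (S₀ * S₁) ^ 4 = 1 ∧ (S₁ * S₂) ^ 4 = 1 := by
  decide
end

section
/- The group G generated by matrices S₀, S₁, S₂ (as in the invariance group of rectangular Aₙ ₄F₃ series) is isomorphic to a semidirect product of the Weyl group W(C₂) of order 8 acting on (ℤ/3ℤ)², where W(C₂) acts on the coroot lattice of C₂ modulo 3. -/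
/-!
Inside `⟨S₀, S₁, S₂⟩` one finds two commuting matrices `T₁, T₂` of order 3 and two matrices
`Rot, Refl` satisfying the relations of the dihedral group of order 8, which normalise
`⟨T₁, T₂⟩` through the action of `W(C₂)` on `(ℤ/3ℤ)²`. Hence `(v, w) ↦ T₁^v₁ T₂^v₂ · w` is a
homomorphism from `(ℤ/3ℤ)² ⋊ W(C₂)` to the matrices. It is injective (its kernel is checked on
the 72 elements), and it maps three elements generating the semidirect product to
`S₀, S₁, S₂`, so it is an isomorphism onto the monoid they generate.
-/

variable {M : Type*} [Monoid M]

theorem pow_mul_mul_pow_of_mul_mul_eq {r s : M} (hrs : r * s * r = s) (k : ℕ) :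
    r ^ k * s * r ^ k = s := by
  induction k with
  | zero => simp
  | succ k ih =>
    calc r ^ (k + 1) * s * r ^ (k + 1) = r ^ k * (r * s * r) * r ^ k := by
          nth_rewrite 2 [pow_succ']; rw [pow_succ]; simp only [mul_assoc]
      _ = s := by rw [hrs, ih]

section ZModPowers

variable {n m : ℕ} [NeZero n] [NeZero m]

theorem ZMod.pow_val_add {a : M} (ha : a ^ n = 1) (i j : ZMod n) :
    a ^ (i + j).val = a ^ i.val * a ^ j.val := by
  rw [ZMod.val_add, ← pow_eq_pow_mod _ ha, pow_add]

def ZMod.powHom (a : M) (ha : a ^ n = 1) : Multiplicative (ZMod n) →* M where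
  toFun k := a ^ k.toAdd.val
  map_one' := by simp
  map_mul' i j := ZMod.pow_val_add ha i.toAdd j.toAdd

def ZMod.prodPowHom (a b : M) (ha : a ^ n = 1) (hb : b ^ m = 1)
    (hab : Commute a b) : Multiplicative (ZMod n × ZMod m) →* M :=
  ((ZMod.powHom a ha).noncommCoprod (ZMod.powHom b hb) fun _ _ ↦ hab.pow_pow _ _).comp
    (MulEquiv.prodMultiplicative (ZMod n) (ZMod m)).toMonoidHom

theorem Multiplicative.ofAdd_prod_eq_pow_mul_pow (v : ZMod n × ZMod m) :
    (ofAdd v : Multiplicative (ZMod n × ZMod m)) =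
      ofAdd (1, 0) ^ v.1.val * ofAdd (0, 1) ^ v.2.val := by
  apply toAdd.injective
  ext <;> simp

theorem Multiplicative.mclosure_zmod_prod_eq_top :
    Submonoid.closure {ofAdd (1, 0), ofAdd (0, 1)} =
      (⊤ : Submonoid (Multiplicative (ZMod n × ZMod m))) := by
  refine eq_top_iff.2 fun x _ ↦ ?_
  -- `rw` would time out closing the goal by `rfl`, unfolding membership in the closure.
  rewrite [← ofAdd_toAdd x, ofAdd_prod_eq_pow_mul_pow x.toAdd]
  refine mul_mem (pow_mem (Submonoid.subset_closure ?_) _)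
    (pow_mem (Submonoid.subset_closure ?_) _)
  · exact Set.mem_insert _ _
  · exact Set.mem_insert_of_mem _ rfl

end ZModPowers

namespace DihedralGroup

variable {n : ℕ} [NeZero n]

def lift (r s : M) (hr : r ^ n = 1) (hs : s * s = 1) (hrs : r * s * r = s) :
    DihedralGroup n →* M where
  toFun
    | .r i => r ^ i.val
    | .sr i => s * r ^ i.val
  map_one' := by simp only [one_def, ZMod.val_zero, pow_zero]
  map_mul' := by
    have hj (i j : ZMod n) : r ^ j.val = r ^ i.val * r ^ (j - i).val := by
      rw [← ZMod.pow_val_add hr, add_sub_cancel]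
    rintro (i | i) (j | j)
    · simp only [r_mul_r, ZMod.pow_val_add hr]
    · show s * r ^ (j - i).val = r ^ i.val * (s * r ^ j.val)
      calc s * r ^ (j - i).val = r ^ i.val * s * r ^ i.val * r ^ (j - i).val := by
            rw [pow_mul_mul_pow_of_mul_mul_eq hrs]
        _ = r ^ i.val * (s * r ^ j.val) := by rw [hj i j]; simp only [mul_assoc]
    · simp only [sr_mul_r, ZMod.pow_val_add hr, mul_assoc]
    · show r ^ (j - i).val = s * r ^ i.val * (s * r ^ j.val)
      calc r ^ (j - i).val = s * s * r ^ (j - i).val := by rw [hs, one_mul]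
        _ = s * (r ^ i.val * s * r ^ i.val) * r ^ (j - i).val := by
            rw [pow_mul_mul_pow_of_mul_mul_eq hrs]
        _ = s * r ^ i.val * (s * r ^ j.val) := by rw [hj i j]; simp only [mul_assoc]

theorem mclosure_r_one_sr_zero_eq_top :
    Submonoid.closure {r 1, sr 0} = (⊤ : Submonoid (DihedralGroup n)) := by
  have hr (i : ZMod n) : r i ∈ Submonoid.closure {r 1, sr 0} := by
    rw [← ZMod.natCast_zmod_val i, ← r_one_pow]
    exact pow_mem (Submonoid.subset_closure (by simp)) _
  refine eq_top_iff.2 fun x _ ↦ ?_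
  rcases x with i | i
  · exact hr i
  · rw [← zero_add i, ← sr_mul_r]
    exact mul_mem (Submonoid.subset_closure (by simp)) (hr i)

end DihedralGroup

namespace SemidirectProduct

variable {N G : Type*} [Group N] [Group G]

def Compatible (φ : G →* MulAut N) (fn : N →* M) (fg : G →* M) : Prop :=
  ∀ g n, fn (φ g n) * fg g = fg g * fn n

variable {φ : G →* MulAut N}

theorem Compatible.of_mclosure {fn : N →* M} {fg : G →* M} {tN : Set N} {tG : Set G}
    (hN : Submonoid.closure tN = ⊤) (hG : Submonoid.closure tG = ⊤)
    (h : ∀ g ∈ tG, ∀ n ∈ tN, fn (φ g n) * fg g = fg g * fn n) : Compatible φ fn fg := by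
  have hgen (g : G) (hg : g ∈ tG) (n : N) : fn (φ g n) * fg g = fg g * fn n := by
    induction hN.symm ▸ Submonoid.mem_top n using Submonoid.closure_induction with
    | mem n hn => exact h g hg n hn
    | one => simp
    | mul a b _ _ ha hb =>
      rw [map_mul, map_mul, mul_assoc, hb, ← mul_assoc, ha, map_mul, mul_assoc]
  intro g
  induction hG.symm ▸ Submonoid.mem_top g using Submonoid.closure_induction with
  | mem g hg => exact hgen g hg
  | one => intro n; simp
  | mul a b _ _ ha hb =>
    intro n
    rw [map_mul φ, MulAut.mul_apply, map_mul fg, ← mul_assoc, ha, mul_assoc, hb, mul_assoc]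

def liftToMonoid (fn : N →* M) (fg : G →* M) (h : Compatible φ fn fg) : N ⋊[φ] G →* M where
  toFun x := fn x.left * fg x.right
  map_one' := by simp
  map_mul' x y := by
    simp only [mul_left, mul_right, map_mul]
    calc fn x.left * fn (φ x.right y.left) * (fg x.right * fg y.right)
        = fn x.left * (fn (φ x.right y.left) * fg x.right) * fg y.right := by
          simp only [mul_assoc]
      _ = fn x.left * fg x.right * (fn y.left * fg y.right) := by
        rw [h x.right y.left]; simp only [mul_assoc]

theorem mclosure_eq_top_of_inl_inr {tN : Set N} {tG : Set G} (hN : Submonoid.closure tN = ⊤)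
    (hG : Submonoid.closure tG = ⊤) {s : Set (N ⋊[φ] G)}
    (hsN : inl '' tN ⊆ (Submonoid.closure s : Set (N ⋊[φ] G)))
    (hsG : inr '' tG ⊆ (Submonoid.closure s : Set (N ⋊[φ] G))) : Submonoid.closure s = ⊤ := by
  have hl : (Submonoid.closure tN).map inl ≤ Submonoid.closure s := by
    rw [MonoidHom.map_mclosure]; exact Submonoid.closure_le.2 hsN
  have hr : (Submonoid.closure tG).map inr ≤ Submonoid.closure s := by
    rw [MonoidHom.map_mclosure]; exact Submonoid.closure_le.2 hsG
  refine eq_top_iff.2 fun x _ ↦ inl_left_mul_inr_right x ▸ mul_mem ?_ ?_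
  · exact hl (Submonoid.mem_map_of_mem _ (hN ▸ Submonoid.mem_top x.left))
  · exact hr (Submonoid.mem_map_of_mem _ (hG ▸ Submonoid.mem_top x.right))

end SemidirectProduct

noncomputable def Submonoid.closureImageMulEquiv {G : Type*} [Monoid G] (f : G →* M)
    (hf : Function.Injective f) {s : Set G} (hs : Submonoid.closure s = ⊤) :
    Submonoid.closure (f '' s) ≃* G :=
  (MulEquiv.submonoidCongr (by rw [← MonoidHom.map_mclosure, hs])).trans
    ((Submonoid.equivMapOfInjective ⊤ f hf).symm.trans Submonoid.topEquiv)

namespace Rectangular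

open Multiplicative SemidirectProduct

abbrev Mat := Matrix (Fin 6) (Fin 6) ℤ

def S₀ : Mat := !![0,1,0,0,0,0; 1,0,0,0,0,0; 0,0,1,0,0,0; 0,0,0,1,0,0; 0,0,0,0,1,0; 0,0,0,0,0,1]
def S₁ : Mat :=
  !![1,0,0,0,0,0; 0,-1,0,0,1,0; 0,0,-1,0,1,0; 0,-1,-1,0,1,1; 0,0,0,0,1,0; 0,-1,-1,1,1,0]
def S₂ : Mat := !![1,0,0,0,0,0; 0,1,0,0,0,0; 0,0,1,0,0,0; 0,0,0,1,0,0; 0,0,0,0,0,1; 0,0,0,0,1,0]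

def T₁ : Mat :=
  !![0,-1,0,0,0,1; -1,0,0,0,0,1; 0,0,1,0,0,0; -1,-1,0,1,0,1; 0,0,0,0,0,1; -1,-1,0,0,1,1]
def T₂ : Mat :=
  !![-1,0,0,0,0,1; -1,-1,-1,1,0,1; -1,0,0,1,0,0; -1,-1,0,1,0,1; -1,0,-1,1,0,1; -2,-1,-1,1,1,1]
def Rot : Mat :=
  !![-1,0,0,0,0,1; 0,1,0,0,0,0; 0,0,-1,0,0,1; -1,0,-1,0,1,1; 0,0,0,0,0,1; -1,0,-1,1,0,1]
def Refl : Mat :=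
  !![-1,0,0,0,1,0; 0,1,0,0,0,0; 0,0,-1,0,1,0; -1,0,-1,0,1,1; 0,0,0,0,1,0; -1,0,-1,1,1,0]

abbrev V := Multiplicative (ZMod 3 × ZMod 3)

-- The action by which `Rot` and `Refl` conjugate `T₁` and `T₂`.
def ρ : MulAut V := AddEquiv.toMultiplicative
  { toFun := fun v ↦ (v.1 + 2 * v.2, 2 * v.1 + 2 * v.2)
    invFun := fun v ↦ (2 * v.1 + v.2, v.1 + v.2)
    left_inv := by decide
    right_inv := by decide
    map_add' := by decide }

def σ : MulAut V := AddEquiv.toMultiplicative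
  { toFun := fun v ↦ (2 * v.1, v.1 + v.2)
    invFun := fun v ↦ (2 * v.1, v.1 + v.2)
    left_inv := by decide
    right_inv := by decide
    map_add' := by decide }

def action : DihedralGroup 4 →* MulAut V :=
  DihedralGroup.lift ρ σ (MulEquiv.ext (by decide)) (MulEquiv.ext (by decide))
    (MulEquiv.ext (by decide))

def translation : V →* Mat := ZMod.prodPowHom T₁ T₂ (by decide) (by decide)
  (show T₁ * T₂ = T₂ * T₁ by decide)

def weyl : DihedralGroup 4 →* Mat :=
  DihedralGroup.lift Rot Refl (by decide) (by decide) (by decide)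

theorem compatible : Compatible action translation weyl :=
  .of_mclosure mclosure_zmod_prod_eq_top DihedralGroup.mclosure_r_one_sr_zero_eq_top
    (by rintro g (rfl | rfl) n (rfl | rfl) <;> decide)

abbrev K := V ⋊[action] DihedralGroup 4

def embedding : K →* Mat := liftToMonoid translation weyl compatible

theorem embedding_injective : Function.Injective embedding :=
  (injective_iff_map_eq_one _).2 <| by
    rintro ⟨v, g⟩
    revert v g
    decide

def g₀ : K := ⟨ofAdd (2, 1), .sr 3⟩
def g₁ : K := ⟨ofAdd (0, 1), .sr 2⟩
def g₂ : K := ⟨1, .sr 1⟩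

theorem image_generators : embedding '' {g₀, g₁, g₂} = {S₀, S₁, S₂} := by
  rw [Set.image_insert_eq, Set.image_insert_eq, Set.image_singleton,
    show embedding g₀ = S₀ by decide, show embedding g₁ = S₁ by decide,
    show embedding g₂ = S₂ by decide]

theorem mclosure_generators : Submonoid.closure {g₀, g₁, g₂} = ⊤ := by
  have hword (l : List K) (hl : ∀ x ∈ l, x = g₀ ∨ x = g₁ ∨ x = g₂) :
      l.prod ∈ Submonoid.closure {g₀, g₁, g₂} :=
    Submonoid.list_prod_mem _ fun x hx ↦ Submonoid.subset_closure (hl x hx)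
  refine mclosure_eq_top_of_inl_inr mclosure_zmod_prod_eq_top
    DihedralGroup.mclosure_r_one_sr_zero_eq_top ?_ ?_
  · rintro _ ⟨v, (rfl | rfl), rfl⟩
    · exact (show [g₁, g₀, g₁, g₂].prod = inl (ofAdd (1, 0)) by decide) ▸ hword _ (by decide)
    · exact (show [g₁, g₀, g₂, g₁, g₀, g₂].prod = inl (ofAdd (0, 1)) by decide) ▸
        hword _ (by decide)
  · rintro _ ⟨g, (rfl | rfl), rfl⟩
    · exact (show [g₀, g₁, g₀, g₂].prod = inr (.r 1) by decide) ▸ hword _ (by decide)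
    · exact (show [g₀, g₁, g₀].prod = inr (.sr 0) by decide) ▸ hword _ (by decide)

noncomputable def closureMulEquiv : Submonoid.closure {S₀, S₁, S₂} ≃* K :=
  (MulEquiv.submonoidCongr (by rw [image_generators])).trans
    (Submonoid.closureImageMulEquiv embedding embedding_injective mclosure_generators)

end Rectangular

/-- The group `G = ⟨S₀, S₁, S₂⟩` is isomorphic to a semidirect product of the
Weyl group `W(C₂)` (the dihedral group of order 8) acting on `(ℤ/3ℤ)²`
(the coroot lattice of `C₂` modulo 3). -/
theorem rectangular_group_semidirect_product :
    let S₀ : Matrix (Fin 6) (Fin 6) ℤ :=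
      !![0,1,0,0,0,0; 1,0,0,0,0,0; 0,0,1,0,0,0; 0,0,0,1,0,0; 0,0,0,0,1,0; 0,0,0,0,0,1]
    let S₁ : Matrix (Fin 6) (Fin 6) ℤ :=
      !![1,0,0,0,0,0; 0,-1,0,0,1,0; 0,0,-1,0,1,0; 0,-1,-1,0,1,1; 0,0,0,0,1,0; 0,-1,-1,1,1,0]
    let S₂ : Matrix (Fin 6) (Fin 6) ℤ :=
      !![1,0,0,0,0,0; 0,1,0,0,0,0; 0,0,1,0,0,0; 0,0,0,1,0,0; 0,0,0,0,0,1; 0,0,0,0,1,0]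
    ∃ φ : DihedralGroup 4 →* MulAut (Multiplicative (ZMod 3 × ZMod 3)),
      Nonempty ((Submonoid.closure {S₀, S₁, S₂} : Submonoid (Matrix (Fin 6) (Fin 6) ℤ))
        ≃* (Multiplicative (ZMod 3 × ZMod 3)) ⋊[φ] DihedralGroup 4) :=
  ⟨Rectangular.action, ⟨Rectangular.closureMulEquiv⟩⟩
end

section
/- In the group G of order 72 generated by S₀, S₁, S₂ (the invariance group of rectangular Aₙ ₄F₃ series), with H the subgroup generated by S₀ and S₂, the double coset space H\G/H has exactly 8 elements, with representatives id, s₁, s₁s₂s₁, s₁s₀s₁, s₁s₀s₂s₁, s₁s₂s₁s₀s₁, s₁s₀s₁s₂s₁, and s₁s₀s₂s₁s₀s₂s₁. -/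
/-! The subgroup `H = ⟨S₀, S₂⟩` consists of the four involutions `1, S₀, S₂, S₀S₂`. The union of
the eight double cosets `H rᵢ H` contains `1` and is stable under right multiplication by `S₀`,
`S₂` (they lie in `H`) and by `S₁`: each of the 32 products `rᵢ h S₁` is of the form `h' rⱼ h''`.
Hence it contains `G`. The eight double cosets are distinct because `rᵢ ∉ H rⱼ H` for `i ≠ j`,
again a finite check over `h, h' ∈ H`. -/

open DoubleCoset

section Monoid

variable {M : Type*} [Monoid M]

lemma mem_doubleCoset_self_of_submonoid (H K : Submonoid M) (a : M) :
    a ∈ doubleCoset a H K :=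
  mem_doubleCoset.2 ⟨1, H.one_mem, 1, K.one_mem, by simp⟩

lemma mul_mem_doubleCoset_of_mem_right {H K : Submonoid M} {a k s : M} (hk : k ∈ K)
    (hs : s ∈ K) : a * k * s ∈ doubleCoset a H K :=
  mem_doubleCoset.2 ⟨1, H.one_mem, k * s, K.mul_mem hk hs, by simp [mul_assoc]⟩

lemma doubleCoset_eq_of_mem_of_submonoid {H K : Submonoid M}
    (hH : ∀ h ∈ H, ∃ h' ∈ H, h' * h = 1) (hK : ∀ k ∈ K, ∃ k' ∈ K, k * k' = 1) {a b : M}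
    (hb : b ∈ doubleCoset a H K) : doubleCoset b H K = doubleCoset a H K := by
  obtain ⟨h, hh, k, hk, rfl⟩ := mem_doubleCoset.1 hb
  obtain ⟨h', hh', hh'h⟩ := hH h hh
  obtain ⟨k', hk', hkk'⟩ := hK k hk
  ext x
  simp only [mem_doubleCoset]
  constructor
  · rintro ⟨x₁, hx₁, x₂, hx₂, rfl⟩
    exact ⟨x₁ * h, H.mul_mem hx₁ hh, k * x₂, K.mul_mem hk hx₂, by simp only [mul_assoc]⟩
  · rintro ⟨x₁, hx₁, x₂, hx₂, rfl⟩
    refine ⟨x₁ * h', H.mul_mem hx₁ hh', k' * x₂, K.mul_mem hk' hx₂, ?_⟩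
    calc x₁ * a * x₂ = x₁ * (h' * h) * a * (k * k') * x₂ := by rw [hh'h, hkk', mul_one, mul_one]
      _ = x₁ * h' * (h * a * k) * (k' * x₂) := by simp only [mul_assoc]

lemma closure_subset_iUnion_doubleCoset {H K : Submonoid M} {ι : Type*} {r : ι → M} {S : Set M}
    (h_one : (1 : M) ∈ ⋃ i, doubleCoset (r i) H K)
    (h_mul : ∀ s ∈ S, ∀ i, ∀ k ∈ K, r i * k * s ∈ ⋃ j, doubleCoset (r j) H K) :
    (Submonoid.closure S : Set M) ⊆ ⋃ i, doubleCoset (r i) H K := by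
  intro g hg
  induction hg using Submonoid.closure_induction_right with
  | one => exact h_one
  | mul_right x _ s hs hx =>
    obtain ⟨i, hi⟩ := Set.mem_iUnion.1 hx
    obtain ⟨h, hh, k, hk, rfl⟩ := mem_doubleCoset.1 hi
    obtain ⟨j, hj⟩ := Set.mem_iUnion.1 (h_mul s hs i k hk)
    obtain ⟨h', hh', k', hk', hrks⟩ := mem_doubleCoset.1 hj
    refine Set.mem_iUnion.2 ⟨j, mem_doubleCoset.2 ⟨h * h', H.mul_mem hh hh', k', hk', ?_⟩⟩
    simp only [mul_assoc] at hrks ⊢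
    rw [hrks]

lemma setOf_doubleCoset_eq_range {H K : Submonoid M}
    (hH : ∀ h ∈ H, ∃ h' ∈ H, h' * h = 1) (hK : ∀ k ∈ K, ∃ k' ∈ K, k * k' = 1) {G : Set M}
    {ι : Type*} {r : ι → M} (hr : ∀ i, r i ∈ G) (hG : G ⊆ ⋃ i, doubleCoset (r i) H K) :
    {d | ∃ g ∈ G, d = doubleCoset g H K} = Set.range (fun i ↦ doubleCoset (r i) H K) := by
  ext d
  constructor
  · rintro ⟨g, hg, rfl⟩
    obtain ⟨i, hi⟩ := Set.mem_iUnion.1 (hG hg)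
    exact ⟨i, (doubleCoset_eq_of_mem_of_submonoid hH hK hi).symm⟩
  · rintro ⟨i, rfl⟩
    exact ⟨r i, hr i, rfl⟩

lemma injective_doubleCoset {H K : Submonoid M} {ι : Type*} {r : ι → M}
    (hr : ∀ i j, r i ∈ doubleCoset (r j) H K → i = j) :
    Function.Injective (fun i ↦ doubleCoset (r i) H K) := by
  intro i j hij
  apply hr i j
  rw [← show doubleCoset (r i) H K = doubleCoset (r j) H K from hij]
  exact mem_doubleCoset_self_of_submonoid H K (r i)

end Monoid

namespace RectangularA4F3

local notation "Mat" => Matrix (Fin 6) (Fin 6) ℤ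

def S₀ : Mat :=
  !![0,1,0,0,0,0; 1,0,0,0,0,0; 0,0,1,0,0,0; 0,0,0,1,0,0; 0,0,0,0,1,0; 0,0,0,0,0,1]
def S₁ : Mat :=
  !![1,0,0,0,0,0; 0,-1,0,0,1,0; 0,0,-1,0,1,0; 0,-1,-1,0,1,1; 0,0,0,0,1,0; 0,-1,-1,1,1,0]
def S₂ : Mat :=
  !![1,0,0,0,0,0; 0,1,0,0,0,0; 0,0,1,0,0,0; 0,0,0,1,0,0; 0,0,0,0,0,1; 0,0,0,0,1,0]

def G : Submonoid Mat := Submonoid.closure {S₀, S₁, S₂}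
def H : Submonoid Mat := Submonoid.closure {S₀, S₂}

def elemH : Fin 4 → Mat := ![1, S₀, S₂, S₀ * S₂]

def rep : Fin 8 → Mat :=
  ![1, S₁, S₁ * S₂ * S₁, S₁ * S₀ * S₁, S₁ * S₀ * S₂ * S₁, S₁ * S₂ * S₁ * S₀ * S₁,
    S₁ * S₀ * S₁ * S₂ * S₁, S₁ * S₀ * S₂ * S₁ * S₀ * S₂ * S₁]

lemma S₀_mem_H : S₀ ∈ H := Submonoid.subset_closure (by simp)
lemma S₂_mem_H : S₂ ∈ H := Submonoid.subset_closure (by simp)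

lemma elemH_mul_elemH : ∀ k l, ∃ m, elemH m = elemH k * elemH l := by decide
lemma elemH_mul_self : ∀ k, elemH k * elemH k = 1 := by decide

lemma mem_H_iff {x : Mat} : x ∈ H ↔ ∃ k, elemH k = x := by
  constructor
  · intro hx
    induction hx using Submonoid.closure_induction with
    | mem y hy =>
      rcases hy with rfl | rfl
      exacts [⟨1, rfl⟩, ⟨2, rfl⟩]
    | one => exact ⟨0, rfl⟩
    | mul _ _ _ _ hx hy =>
      obtain ⟨k, rfl⟩ := hx
      obtain ⟨l, rfl⟩ := hy
      exact elemH_mul_elemH k l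
  · rintro ⟨k, rfl⟩
    fin_cases k
    exacts [H.one_mem, S₀_mem_H, S₂_mem_H, H.mul_mem S₀_mem_H S₂_mem_H]

lemma mul_self_eq_one_of_mem_H {h : Mat} (hh : h ∈ H) : h * h = 1 := by
  obtain ⟨k, rfl⟩ := mem_H_iff.1 hh
  exact elemH_mul_self k

lemma rep_mem_G : ∀ i, rep i ∈ G := by
  have h₀ : S₀ ∈ G := Submonoid.subset_closure (by simp)
  have h₁ : S₁ ∈ G := Submonoid.subset_closure (by simp)
  have h₂ : S₂ ∈ G := Submonoid.subset_closure (by simp)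
  intro i
  fin_cases i <;> simp only [rep] <;>
    repeat' first | exact G.one_mem | assumption | apply G.mul_mem

lemma rep_mul_elemH_mul_S₁ :
    ∀ i k, ∃ j a b, rep i * elemH k * S₁ = elemH a * rep j * elemH b := by
  decide

lemma eq_of_rep_eq : ∀ i j a b, rep i = elemH a * rep j * elemH b → i = j := by
  decide

lemma G_subset_iUnion_doubleCoset : (G : Set Mat) ⊆ ⋃ i, doubleCoset (rep i) H H := by
  refine closure_subset_iUnion_doubleCoset
    (Set.mem_iUnion.2 ⟨0, mem_doubleCoset_self_of_submonoid H H 1⟩) ?_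
  rintro s (rfl | rfl | rfl) i k hk
  · exact Set.mem_iUnion.2 ⟨i, mul_mem_doubleCoset_of_mem_right hk S₀_mem_H⟩
  · obtain ⟨k, rfl⟩ := mem_H_iff.1 hk
    obtain ⟨j, a, b, hj⟩ := rep_mul_elemH_mul_S₁ i k
    exact Set.mem_iUnion.2 ⟨j, mem_doubleCoset.2
      ⟨elemH a, mem_H_iff.2 ⟨a, rfl⟩, elemH b, mem_H_iff.2 ⟨b, rfl⟩, hj⟩⟩
  · exact Set.mem_iUnion.2 ⟨i, mul_mem_doubleCoset_of_mem_right hk S₂_mem_H⟩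

lemma setOf_doubleCoset_eq_range_rep :
    {d | ∃ g ∈ G, d = doubleCoset g H H} = Set.range (fun i ↦ doubleCoset (rep i) H H) :=
  setOf_doubleCoset_eq_range (fun h hh ↦ ⟨h, hh, mul_self_eq_one_of_mem_H hh⟩)
    (fun h hh ↦ ⟨h, hh, mul_self_eq_one_of_mem_H hh⟩)
    rep_mem_G G_subset_iUnion_doubleCoset

lemma range_doubleCoset_rep : Set.range (fun i ↦ doubleCoset (rep i) H H) =
    {doubleCoset 1 H H, doubleCoset S₁ H H, doubleCoset (S₁ * S₂ * S₁) H H,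
      doubleCoset (S₁ * S₀ * S₁) H H, doubleCoset (S₁ * S₀ * S₂ * S₁) H H,
      doubleCoset (S₁ * S₂ * S₁ * S₀ * S₁) H H, doubleCoset (S₁ * S₀ * S₁ * S₂ * S₁) H H,
      doubleCoset (S₁ * S₀ * S₂ * S₁ * S₀ * S₂ * S₁) H H} := by
  rw [show (fun i ↦ doubleCoset (rep i) H H) = (doubleCoset · H H) ∘ rep from rfl, Set.range_comp]
  simp only [rep, Matrix.range_cons, Matrix.range_empty, Set.union_empty, Set.singleton_union,
    Set.image_insert_eq, Set.image_singleton]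

lemma injective_doubleCoset_rep : Function.Injective (fun i ↦ doubleCoset (rep i) H H) := by
  refine injective_doubleCoset fun i j hij ↦ ?_
  obtain ⟨h₁, hh₁, h₂, hh₂, hij⟩ := mem_doubleCoset.1 hij
  obtain ⟨a, rfl⟩ := mem_H_iff.1 hh₁
  obtain ⟨b, rfl⟩ := mem_H_iff.1 hh₂
  exact eq_of_rep_eq i j a b hij

lemma ncard_setOf_doubleCoset : {d | ∃ g ∈ G, d = doubleCoset g H H}.ncard = 8 := by
  rw [setOf_doubleCoset_eq_range_rep, Set.ncard_range_of_injective injective_doubleCoset_rep,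
    Nat.card_eq_fintype_card, Fintype.card_fin]

end RectangularA4F3

/-- In the order-72 group `G = ⟨S₀, S₁, S₂⟩` with `H = ⟨S₀, S₂⟩`, the double
coset space `H\G/H` has exactly 8 elements, represented by
`1, s₁, s₁s₂s₁, s₁s₀s₁, s₁s₀s₂s₁, s₁s₂s₁s₀s₁, s₁s₀s₁s₂s₁, s₁s₀s₂s₁s₀s₂s₁`. -/
theorem rectangular_double_coset_decomposition :
    let S₀ : Matrix (Fin 6) (Fin 6) ℤ :=
      !![0,1,0,0,0,0; 1,0,0,0,0,0; 0,0,1,0,0,0; 0,0,0,1,0,0; 0,0,0,0,1,0; 0,0,0,0,0,1]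
    let S₁ : Matrix (Fin 6) (Fin 6) ℤ :=
      !![1,0,0,0,0,0; 0,-1,0,0,1,0; 0,0,-1,0,1,0; 0,-1,-1,0,1,1; 0,0,0,0,1,0; 0,-1,-1,1,1,0]
    let S₂ : Matrix (Fin 6) (Fin 6) ℤ :=
      !![1,0,0,0,0,0; 0,1,0,0,0,0; 0,0,1,0,0,0; 0,0,0,1,0,0; 0,0,0,0,0,1; 0,0,0,0,1,0]
    let G : Submonoid (Matrix (Fin 6) (Fin 6) ℤ) := Submonoid.closure {S₀, S₁, S₂}
    let H : Submonoid (Matrix (Fin 6) (Fin 6) ℤ) := Submonoid.closure {S₀, S₂}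
    let doset : Matrix (Fin 6) (Fin 6) ℤ → Set (Matrix (Fin 6) (Fin 6) ℤ) :=
      fun g => {x | ∃ h₁ ∈ H, ∃ h₂ ∈ H, x = h₁ * g * h₂}
    {d : Set (Matrix (Fin 6) (Fin 6) ℤ) | ∃ g ∈ G, d = doset g} =
      {doset 1, doset S₁, doset (S₁ * S₂ * S₁), doset (S₁ * S₀ * S₁),
        doset (S₁ * S₀ * S₂ * S₁), doset (S₁ * S₂ * S₁ * S₀ * S₁),
        doset (S₁ * S₀ * S₁ * S₂ * S₁), doset (S₁ * S₀ * S₂ * S₁ * S₀ * S₂ * S₁)} ∧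
    Set.ncard {d : Set (Matrix (Fin 6) (Fin 6) ℤ) | ∃ g ∈ G, d = doset g} = 8 := by
  intro S₀ S₁ S₂ G H doset
  have h_doset : doset = fun g ↦ doubleCoset g H H :=
    funext fun _ ↦ Set.ext fun _ ↦ mem_doubleCoset.symm
  rw [h_doset]
  exact ⟨RectangularA4F3.setOf_doubleCoset_eq_range_rep.trans
    RectangularA4F3.range_doubleCoset_rep, RectangularA4F3.ncard_setOf_doubleCoset⟩
end

section
/- The group Gᵣ of 8×8 integer matrices generated by B₁, B₂ (as in the Aₙ elliptic Bailey transformations) and the permutation matrices S₀, S₁ (swapping coordinates 2↔3, 3↔4) and T₀, T₁ (swapping coordinates 5↔6, 6↔7) is isomorphic to 𝔖₆ × 𝔖₂, hence has order 1440. -/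
/-!
The group acts on `ℤ⁸` by permuting the twelve vectors `a i + b ε` (`i : Fin 6`, `ε : Fin 2`)
and fixing two further vectors `w₁, w₂`. On the index set `Fin 6 × Fin 2`, the generators
`T₁, T₀, B₁, S₀, S₁` act as the adjacent transpositions of `Fin 6` and `B₂` as the transposition
of `Fin 2`, so the induced permutations fill out `𝔖₆ × 𝔖₂`. Eight of the fourteen vectors form a
`ℤ`-basis, hence a matrix is determined by the permutation it induces. The pairs (matrix, induced
permutation) therefore form the graph of an isomorphism.
-/

/-- The 8×8 permutation matrix swapping coordinates `k` and `l` (0-indexed). -/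
def swapMatrix8 (k : Fin 8) (l : Fin 8) : Matrix (Fin 8) (Fin 8) ℤ :=
  fun i j => if (Equiv.swap k l) i = j then 1 else 0

open Equiv Matrix

theorem Matrix.eq_of_mulVec_eq_of_mul_eq_one {ι m n R : Type*} [Fintype ι] [Fintype n]
    [DecidableEq n] [CommSemiring R] {v : ι → n → R} {W : Matrix n ι R} (hW : W * Matrix.of v = 1)
    {g h : Matrix m n R} (hgh : ∀ j, g *ᵥ v j = h *ᵥ v j) : g = h := by
  have hv : g * (Matrix.of v)ᵀ = h * (Matrix.of v)ᵀ := by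
    ext i j
    exact congrFun (hgh j) i
  calc g = g * (W * Matrix.of v)ᵀ := by rw [hW, transpose_one, Matrix.mul_one]
    _ = h * (Matrix.of v)ᵀ * Wᵀ := by rw [transpose_mul, ← Matrix.mul_assoc, hv]
    _ = h := by rw [Matrix.mul_assoc, ← transpose_mul, hW, transpose_one, Matrix.mul_one]

theorem MonoidHom.submonoidMap_injective_of_injOn {M N : Type*} [Monoid M] [Monoid N]
    {f : M →* N} {H : Submonoid M} (hf : Set.InjOn f H) : Function.Injective (f.submonoidMap H) :=
  fun x y hxy => Subtype.ext (hf x.2 y.2 (congrArg Subtype.val hxy))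

noncomputable def Submonoid.graphMulEquiv {M N : Type*} [Monoid M] [Monoid N]
    (H : Submonoid (M × N)) (hfst : Set.InjOn Prod.fst (H : Set (M × N)))
    (hsnd : Set.InjOn Prod.snd (H : Set (M × N))) :
    H.map (MonoidHom.fst M N) ≃* H.map (MonoidHom.snd M N) :=
  (MulEquiv.ofBijective _ ⟨MonoidHom.submonoidMap_injective_of_injOn hfst,
      MonoidHom.submonoidMap_surjective _ H⟩).symm.trans
    (MulEquiv.ofBijective _ ⟨MonoidHom.submonoidMap_injective_of_injOn hsnd,
      MonoidHom.submonoidMap_surjective _ H⟩)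

namespace AnBailey

def B₁ : Matrix (Fin 8) (Fin 8) ℤ :=
  !![2,-1,0,0,0,-1,-1,1; 1,0,0,0,0,-1,-1,1; 0,0,1,0,0,0,0,0; 0,0,0,1,0,0,0,0;
     0,0,0,0,1,0,0,0; 1,-1,0,0,0,0,-1,1; 1,-1,0,0,0,-1,0,1; 0,0,0,0,0,0,0,1]

def B₂ : Matrix (Fin 8) (Fin 8) ℤ :=
  !![2,-1,-1,-1,0,0,0,1; 1,0,-1,-1,0,0,0,1; 1,-1,0,-1,0,0,0,1; 1,-1,-1,0,0,0,0,1;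
     0,0,0,0,1,0,0,0; 0,0,0,0,0,1,0,0; 0,0,0,0,0,0,1,0; 0,0,0,0,0,0,0,1]

abbrev Perm62 := Perm (Fin 6) × Perm (Fin 2)

def weight (x : Fin 6 × Fin 2) : Fin 8 → ℤ :=
  ![![-2,-1,-1,-1,-1,-1,0,0], ![-2,-1,-1,-1,-1,0,-1,0], ![-2,-1,-1,-1,0,-1,-1,0],
    ![-1,0,-1,-1,0,0,0,0], ![-1,-1,0,-1,0,0,0,0], ![-1,-1,-1,0,0,0,0,0]] x.1 +
  ![0, ![1,1,1,1,0,0,0,0]] x.2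

def w₁ : Fin 8 → ℤ := ![3,1,1,1,1,1,1,0]

def w₂ : Fin 8 → ℤ := ![-1,0,0,0,0,0,0,1]

theorem weight_injective : Function.Injective weight := by decide

def Permutes (g : Matrix (Fin 8) (Fin 8) ℤ) (p : Perm62) : Prop :=
  (∀ x, g *ᵥ weight x = weight (Prod.map p.1 p.2 x)) ∧ g *ᵥ w₁ = w₁ ∧ g *ᵥ w₂ = w₂

theorem Permutes.right_unique {g : Matrix (Fin 8) (Fin 8) ℤ} {p q : Perm62}
    (hp : Permutes g p) (hq : Permutes g q) : p = q := by
  have h : ∀ x, Prod.map p.1 p.2 x = Prod.map q.1 q.2 x :=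
    fun x => weight_injective ((hp.1 x).symm.trans (hq.1 x))
  exact Prod.ext (Equiv.ext fun i => congrArg Prod.fst (h (i, 0)))
    (Equiv.ext fun ε => congrArg Prod.snd (h (0, ε)))

theorem Permutes.left_unique {g h : Matrix (Fin 8) (Fin 8) ℤ} {p : Perm62}
    (hg : Permutes g p) (hh : Permutes h p) : g = h := by
  have agree : ∀ x, g *ᵥ weight x = h *ᵥ weight x := fun x => (hg.1 x).trans (hh.1 x).symm
  refine eq_of_mulVec_eq_of_mul_eq_one
    (v := ![weight (0, 0), weight (0, 1), weight (1, 0), weight (2, 0), weight (3, 0),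
      weight (4, 0), w₁, w₂])
    (W := !![0,1,1,1,0,0,2,0; -1,1,0,0,1,0,0,0; -1,1,0,0,0,1,0,0; 1,-2,-1,-1,-1,-1,-2,0;
      0,-1,-1,0,0,0,-1,0; 0,-1,0,-1,0,0,-1,0; 1,-1,-1,-1,0,0,-1,0; 0,1,1,1,0,0,2,1])
    (by decide) fun j => ?_
  fin_cases j <;> simp [agree, hg.2, hh.2]

def permutesGraph : Submonoid (Matrix (Fin 8) (Fin 8) ℤ × Perm62) where
  carrier := {x | Permutes x.1 x.2}
  one_mem' := ⟨fun x => by simp, one_mulVec _, one_mulVec _⟩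
  mul_mem' {x y} hx hy := by
    refine ⟨fun z => ?_, ?_, ?_⟩
    · rw [Prod.fst_mul, ← mulVec_mulVec, hy.1, hx.1]
      rfl
    · rw [Prod.fst_mul, ← mulVec_mulVec, hy.2.1, hx.2.1]
    · rw [Prod.fst_mul, ← mulVec_mulVec, hy.2.2, hx.2.2]

def generatorPairs : Set (Matrix (Fin 8) (Fin 8) ℤ × Perm62) :=
  {(B₁, (swap 2 3, 1)), (B₂, (1, swap 0 1)), (swapMatrix8 1 2, (swap 3 4, 1)),
    (swapMatrix8 2 3, (swap 4 5, 1)), (swapMatrix8 4 5, (swap 1 2, 1)),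
    (swapMatrix8 5 6, (swap 0 1, 1))}

theorem closure_generatorPairs_le : Submonoid.closure generatorPairs ≤ permutesGraph := by
  rw [Submonoid.closure_le]
  rintro x (rfl | rfl | rfl | rfl | rfl | rfl) <;> exact ⟨by decide, by decide, by decide⟩

theorem map_fst_closure_generatorPairs :
    (Submonoid.closure generatorPairs).map (MonoidHom.fst _ _) =
      Submonoid.closure {B₁, B₂, swapMatrix8 1 2, swapMatrix8 2 3, swapMatrix8 4 5,
        swapMatrix8 5 6} := by
  simp [MonoidHom.map_mclosure, generatorPairs, Set.image_insert_eq]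

theorem map_snd_closure_generatorPairs :
    (Submonoid.closure generatorPairs).map (MonoidHom.snd _ _) = ⊤ := by
  rw [MonoidHom.map_mclosure, eq_top_iff, ← Submonoid.top_prod_top,
    ← Perm.mclosure_swap_castSucc_succ 5, ← Perm.mclosure_swap_castSucc_succ 1,
    Submonoid.prod_le_iff, MonoidHom.map_mclosure, MonoidHom.map_mclosure,
    Submonoid.closure_le, Submonoid.closure_le]
  constructor <;> rintro _ ⟨_, ⟨i, rfl⟩, rfl⟩ <;> apply Submonoid.subset_closure <;>
    fin_cases i <;> simp [generatorPairs]

noncomputable def groupEquiv :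
    Submonoid.closure {B₁, B₂, swapMatrix8 1 2, swapMatrix8 2 3, swapMatrix8 4 5,
      swapMatrix8 5 6} ≃* Perm62 :=
  have hle := closure_generatorPairs_le
  (MulEquiv.submonoidCongr map_fst_closure_generatorPairs).symm.trans <|
    ((Submonoid.closure generatorPairs).graphMulEquiv
      (fun _ hx _ hy hxy => Prod.ext hxy ((hle hx).right_unique (hxy ▸ hle hy)))
      (fun _ hx _ hy hxy => Prod.ext ((hle hx).left_unique (hxy ▸ hle hy)) hxy)).trans <|
    (MulEquiv.submonoidCongr map_snd_closure_generatorPairs).trans Submonoid.topEquiv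

end AnBailey

/-- The group `Gᵣ` generated by `B₁, B₂, S₀, S₁, T₀, T₁` is isomorphic to
`𝔖₆ × 𝔖₂`, hence has order 1440.  (All generators are involutions, so the
submonoid they generate is a group.) -/
theorem an_bailey_group_iso :
    let B₁ : Matrix (Fin 8) (Fin 8) ℤ :=
      !![2,-1,0,0,0,-1,-1,1; 1,0,0,0,0,-1,-1,1; 0,0,1,0,0,0,0,0; 0,0,0,1,0,0,0,0;
         0,0,0,0,1,0,0,0; 1,-1,0,0,0,0,-1,1; 1,-1,0,0,0,-1,0,1; 0,0,0,0,0,0,0,1]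
    let B₂ : Matrix (Fin 8) (Fin 8) ℤ :=
      !![2,-1,-1,-1,0,0,0,1; 1,0,-1,-1,0,0,0,1; 1,-1,0,-1,0,0,0,1; 1,-1,-1,0,0,0,0,1;
         0,0,0,0,1,0,0,0; 0,0,0,0,0,1,0,0; 0,0,0,0,0,0,1,0; 0,0,0,0,0,0,0,1]
    let S₀ := swapMatrix8 1 2
    let S₁ := swapMatrix8 2 3
    let T₀ := swapMatrix8 4 5
    let T₁ := swapMatrix8 5 6
    let G : Submonoid (Matrix (Fin 8) (Fin 8) ℤ) :=
      Submonoid.closure {B₁, B₂, S₀, S₁, T₀, T₁}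
    Nonempty (G ≃* Equiv.Perm (Fin 6) × Equiv.Perm (Fin 2)) ∧ Nat.card G = 1440 := by
  intro B₁ B₂ S₀ S₁ T₀ T₁ G
  refine ⟨⟨AnBailey.groupEquiv⟩, (Nat.card_congr AnBailey.groupEquiv.toEquiv).trans ?_⟩
  rw [Nat.card_prod, Nat.card_perm, Nat.card_perm, Nat.card_fin, Nat.card_fin]
  rfl
end
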